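/- Let n ≥ 2 and let c_{i,j} = Σ_{k=1}^{n−1} a†_{i,k}a_{j,k} be the boson realization of gl(n) on n sites with n−1 species. For each m with 1 ≤ m ≤ n−1, define the determinant operator D_m = det( (a†_{p,q})_{1 ≤ p,q ≤ m} ) (a polynomial in commuting creation operators). Then for every raising operator c_{i,j} with i < j, the state D_{n−1}^{κ_{n−1}} ⋯ D_2^{κ_2} D_1^{κ_1} |0⟩ is annihilated: c_{i,j} D_{n−1}^{κ_{n−1}} ⋯ D_1^{κ_1} |0⟩ = 0. -/

import Mathlib

/-!
The commutator `⁅c_{ij}, ·⁆` is a derivation, and `⁅c_{ij}, a†_{p,q}⁆ = δ_{pj} a†_{i,q}`. Applied to the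
Leibniz expansion of `D_m`, it replaces row `j` of the matrix of creation operators by row `i`;
for `i < j < m` the result is a determinant with two equal rows of commuting entries, hence `0`,
and for `j ≥ m` it is `0` outright. So each `c_{ij}` with `i < j` commutes with every `D_m`,
and it kills the vacuum because it ends in an annihilation operator.
-/

open Equiv Function

attribute [local instance] LieRing.ofAssociativeRing

theorem Ring.lie_mul {R : Type*} [Ring R] (x y z : R) : ⁅x, y * z⁆ = ⁅x, y⁆ * z + y * ⁅x, z⁆ := by
  simp only [Ring.lie_def]; noncomm_ring

theorem Ring.mul_lie {R : Type*} [Ring R] (x y z : R) : ⁅x * y, z⁆ = x * ⁅y, z⁆ + ⁅x, z⁆ * y := by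
  simp only [Ring.lie_def]; noncomm_ring

theorem lie_list_ofFn_prod {R : Type*} [Ring R] (c : R) {m : ℕ} (x : Fin m → R) :
    ⁅c, (List.ofFn x).prod⁆ = ∑ p, (List.ofFn (update x p ⁅c, x p⁆)).prod := by
  induction m with
  | zero => simp [Ring.lie_def]
  | succ m ih =>
    have update_succ : ∀ p v,
        (fun i : Fin m => update x p.succ v i.succ) = update (fun i => x i.succ) p v :=
      fun p v => update_comp_eq_of_injective x (Fin.succ_injective m) p v
    simp [List.ofFn_succ, Fin.sum_univ_succ, Ring.lie_mul, ih, Finset.mul_sum, update_succ,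
      update_of_ne (Fin.succ_ne_zero _).symm]

namespace Matrix

variable {R : Type*} [Ring R] {m : ℕ}

def leibnizDet (A : Matrix (Fin m) (Fin m) R) : R :=
  ∑ σ : Perm (Fin m), (Perm.sign σ : ℤ) • (List.ofFn fun p => A p (σ p)).prod

theorem lie_leibnizDet (c : R) (A : Matrix (Fin m) (Fin m) R) :
    ⁅c, A.leibnizDet⁆ = ∑ p, (A.updateRow p fun q => ⁅c, A p q⁆).leibnizDet := by
  simp only [leibnizDet, lie_sum, lie_zsmul, lie_list_ofFn_prod, Finset.smul_sum]
  rw [Finset.sum_comm]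
  refine Finset.sum_congr rfl fun p _ => Finset.sum_congr rfl fun σ _ => ?_
  congr 3
  funext q
  by_cases hq : q = p
  · subst hq; simp
  · simp [hq]

theorem leibnizDet_updateRow_zero (A : Matrix (Fin m) (Fin m) R) (p : Fin m) :
    (A.updateRow p 0).leibnizDet = 0 :=
  Finset.sum_eq_zero fun σ _ => by
    rw [List.prod_eq_zero (List.mem_ofFn.mpr ⟨p, by simp⟩), smul_zero]

theorem leibnizDet_map {S : Type*} [CommRing S] (f : S →+* R) (A : Matrix (Fin m) (Fin m) S) :
    (A.map f).leibnizDet = f A.det := by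
  rw [← det_transpose, det_apply, map_sum]
  refine Finset.sum_congr rfl fun σ _ => ?_
  rw [Units.smul_def, map_zsmul, ← Fin.prod_ofFn, map_list_prod, List.map_ofFn]
  rfl

open scoped IsMulCommutative in
theorem leibnizDet_eq_zero_of_row_eq (A : Matrix (Fin m) (Fin m) R)
    (hA : ∀ p q p' q', Commute (A p q) (A p' q')) {i j : Fin m} (hij : i ≠ j) (hrow : A i = A j) :
    A.leibnizDet = 0 := by
  let S := Subring.closure (Set.range fun pq : Fin m × Fin m => A pq.1 pq.2)
  have : IsMulCommutative S := Subring.isMulCommutative_closure <| by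
    rintro _ ⟨⟨p, q⟩, rfl⟩ _ ⟨⟨p', q'⟩, rfl⟩
    exact hA p q p' q'
  let A' : Matrix (Fin m) (Fin m) S := fun p q => ⟨A p q, Subring.subset_closure ⟨(p, q), rfl⟩⟩
  have hA'_row : A' i = A' j := funext fun q => Subtype.ext (congrFun hrow q)
  calc A.leibnizDet = S.subtype A'.det := leibnizDet_map S.subtype A'
    _ = 0 := by rw [det_zero_of_row_eq hij hA'_row, map_zero]

end Matrix

section BosonRealization

variable {R : Type*} [Ring R] {n N : ℕ} (a ad : ℕ → ℕ → R)

def bosonGl (N i j : ℕ) : R :=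
  ∑ k ∈ Finset.range N, ad i k * a j k

variable {a ad}
variable (hccr : ∀ i j k l : ℕ, i < n → j < n → k < N → l < N →
    ⁅a i k, ad j l⁆ = if i = j ∧ k = l then 1 else 0)
  (hdd : ∀ i j k l : ℕ, i < n → j < n → k < N → l < N → ⁅ad i k, ad j l⁆ = 0)
include hccr hdd

theorem lie_bosonGl_creation {i j p q : ℕ} (hi : i < n) (hj : j < n) (hp : p < n) (hq : q < N) :
    ⁅bosonGl a ad N i j, ad p q⁆ = if p = j then ad i q else 0 := by
  have hterm : ∀ k ∈ Finset.range N,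
      ⁅ad i k * a j k, ad p q⁆ = if k = q then (if p = j then ad i q else 0) else 0 := by
    intro k hk
    have hk := Finset.mem_range.mp hk
    rw [Ring.mul_lie, hccr j p k q hj hp hk hq, hdd i p k q hi hp hk hq, zero_mul, add_zero]
    split_ifs <;> grind
  rw [bosonGl, sum_lie, Finset.sum_congr rfl hterm, Finset.sum_ite_eq',
    if_pos (Finset.mem_range.mpr hq)]

theorem lie_bosonGl_leibnizDet {i j M : ℕ} (hij : i < j) (hj : j < n) (hMn : M ≤ n)
    (hMN : M ≤ N) :
    ⁅bosonGl a ad N i j, (Matrix.of fun p q : Fin M => ad p q).leibnizDet⁆ = 0 := by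
  rw [Matrix.lie_leibnizDet]
  refine Finset.sum_eq_zero fun p _ => ?_
  have hrow : (fun q : Fin M => ⁅bosonGl a ad N i j, ad p q⁆) =
      fun q : Fin M => if (p : ℕ) = j then ad i q else 0 := funext fun q =>
    lie_bosonGl_creation hccr hdd (hij.trans hj) hj (by omega) (by omega)
  simp only [Matrix.of_apply, hrow]
  by_cases hpj : (p : ℕ) = j
  · -- row `p = j` now repeats row `i`
    have hip : (⟨i, by omega⟩ : Fin M) ≠ p := Fin.ne_of_val_ne (show i ≠ p by omega)
    refine Matrix.leibnizDet_eq_zero_of_row_eq _ (fun r q r' q' => ?_) hip ?_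
    · simp only [Matrix.updateRow_apply, Matrix.of_apply]
      split_ifs <;>
        exact commute_iff_lie_eq.mpr (hdd _ _ _ _ (by omega) (by omega) (by omega) (by omega))
    · funext q
      simp [Matrix.updateRow_apply, hip, hpj]
  · simp only [hpj, if_false]
    exact Matrix.leibnizDet_updateRow_zero _ p

end BosonRealization

theorem determinant_state_highest_weight_general {V : Type*} [AddCommGroup V] [Module ℂ V]
    (n : ℕ)
    (a ad : ℕ → ℕ → Module.End ℂ V) (v₀ : V)
    (hccr : ∀ i j k l : ℕ, i < n → j < n → k < n - 1 → l < n - 1 →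
      a i k * ad j l - ad j l * a i k = if i = j ∧ k = l then 1 else 0)
    (hdd : ∀ i j k l : ℕ, i < n → j < n → k < n - 1 → l < n - 1 →
      ad i k * ad j l - ad j l * ad i k = 0)
    (hvac : ∀ i k : ℕ, i < n → k < n - 1 → (a i k) v₀ = 0)
    (c : ℕ → ℕ → Module.End ℂ V)
    (hc : ∀ i j : ℕ, c i j = ∑ k ∈ Finset.range (n - 1), ad i k * a j k)
    (D : ℕ → Module.End ℂ V)
    (hD : ∀ m : ℕ, D m = ∑ σ : Equiv.Perm (Fin m),
      (Equiv.Perm.sign σ : ℤ) • (List.ofFn fun p : Fin m => ad (p : ℕ) ((σ p : Fin m) : ℕ)).prod)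
    (κ : ℕ → ℕ)
    (ψ : V)
    (hψ : ψ = ((((List.range (n - 1)).reverse).map fun m => D (m + 1) ^ κ (m + 1)).prod) v₀) :
    ∀ i j : ℕ, i < j → j < n → (c i j) ψ = 0 := by
  intro i j hij hj
  have hcD : ∀ m < n - 1, Commute (c i j) (D (m + 1)) := fun m hm => by
    rw [commute_iff_lie_eq, hc, hD]
    exact lie_bosonGl_leibnizDet hccr hdd hij hj (by omega) hm
  have hcW : Commute (c i j)
      ((List.range (n - 1)).reverse.map fun m => D (m + 1) ^ κ (m + 1)).prod :=
    Commute.list_prod_right _ _ fun x hx => by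
      obtain ⟨m, hm, rfl⟩ := List.mem_map.mp hx
      exact (hcD m (List.mem_range.mp (List.mem_reverse.mp hm))).pow_right _
  have hcv₀ : c i j v₀ = 0 := by
    rw [hc, LinearMap.sum_apply]
    exact Finset.sum_eq_zero fun k hk => by
      rw [Module.End.mul_apply, hvac j k hj (Finset.mem_range.mp hk), map_zero]
  rw [hψ, ← Module.End.mul_apply, hcW.eq, Module.End.mul_apply, hcv₀, map_zero]

/-- The determinant state `D_{n−1}^{κ_{n−1}} ⋯ D_1^{κ_1} |0⟩`, built from the Leibniz-formula
determinants `D_m` of the `m × m` matrices of creation operators, is annihilated by every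
gl(n) raising operator `c_{i,j} = Σ_k a†_{i,k} a_{j,k}` with `i < j`. -/
theorem determinant_state_highest_weight {V : Type*} [AddCommGroup V] [Module ℂ V]
    (n : ℕ) (hn : 2 ≤ n)
    (a ad : ℕ → ℕ → Module.End ℂ V) (v₀ : V)
    (hccr : ∀ i j k l : ℕ, i < n → j < n → k < n - 1 → l < n - 1 →
      a i k * ad j l - ad j l * a i k = if i = j ∧ k = l then 1 else 0)
    (haa : ∀ i j k l : ℕ, i < n → j < n → k < n - 1 → l < n - 1 →
      a i k * a j l - a j l * a i k = 0)
    (hdd : ∀ i j k l : ℕ, i < n → j < n → k < n - 1 → l < n - 1 →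
      ad i k * ad j l - ad j l * ad i k = 0)
    (hvac : ∀ i k : ℕ, i < n → k < n - 1 → (a i k) v₀ = 0)
    (c : ℕ → ℕ → Module.End ℂ V)
    (hc : ∀ i j : ℕ, c i j = ∑ k ∈ Finset.range (n - 1), ad i k * a j k)
    (D : ℕ → Module.End ℂ V)
    (hD : ∀ m : ℕ, D m = ∑ σ : Equiv.Perm (Fin m),
      (Equiv.Perm.sign σ : ℤ) • (List.ofFn fun p : Fin m => ad (p : ℕ) ((σ p : Fin m) : ℕ)).prod)
    (κ : ℕ → ℕ)
    (ψ : V)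
    (hψ : ψ = ((((List.range (n - 1)).reverse).map fun m => D (m + 1) ^ κ (m + 1)).prod) v₀) :
    ∀ i j : ℕ, i < j → j < n → (c i j) ψ = 0 :=
  determinant_state_highest_weight_general n a ad v₀ hccr hdd hvac c hc D hD κ ψ hψ
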